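/- arXiv:2511.20108 — 7 statements merged into one kernel-verified Lean document; each statement's English description precedes it below -/
import Mathlib

section
/- Let 0 < H₁ ≤ H_e < H₂ be normalized channel gains of user 1, the eavesdropper, and user 2, respectively, and let p₁ ≥ 0, p₂ ≥ 0 be the allocated powers. Define the SINRs γ_{1→1} = H₁·p₁/(H₁·p₂ + 1), γ_{1→e} = H_e·p₁/(H_e·p₂ + 1), γ_{2→2} = H₂·p₂, γ_{2→e} = H_e·p₂, and the secrecy rates R_k^s = max{0, (1/2)·log₂(1 + γ_{k→k}) − (1/2)·log₂(1 + γ_{k→e})} for k = 1, 2. Then the secrecy sum-rate satisfies R₁^s + R₂^s = (1/2)·log₂((1 + H₂·p₂)/(1 + H_e·p₂)). -/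
/-!
The SINR `h p₁ / (h p₂ + 1)` of the weak user's message grows with the gain `h`, so the
eavesdropper (`H₁ ≤ Hₑ`) hears it at least as well as user 1 and `R₁ˢ = 0`; the strong user's
message is heard better by user 2 (`Hₑ < H₂`), so `R₂ˢ` is the log of the ratio.
-/

open Real

/-- The paper's `Rₖˢ`, with `γ = γ_{k→k}` and `γe = γ_{k→e}`. -/
noncomputable def secrecyRate (γ γe : ℝ) : ℝ :=
  max 0 ((1/2) * logb 2 (1 + γ) - (1/2) * logb 2 (1 + γe))

theorem secrecyRate_eq_zero_of_le {γ γe : ℝ} (hγ : 0 ≤ γ) (h : γ ≤ γe) :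
    secrecyRate γ γe = 0 := by
  have hlog : logb 2 (1 + γ) ≤ logb 2 (1 + γe) :=
    logb_le_logb_of_le one_lt_two (by linarith) (by linarith)
  exact max_eq_left (by linarith)

theorem secrecyRate_eq_of_le {γ γe : ℝ} (hγe : 0 ≤ γe) (h : γe ≤ γ) :
    secrecyRate γ γe = (1/2) * logb 2 ((1 + γ) / (1 + γe)) := by
  have hlog : logb 2 (1 + γe) ≤ logb 2 (1 + γ) :=
    logb_le_logb_of_le one_lt_two (by linarith) (by linarith)
  rw [secrecyRate, max_eq_right (by linarith), logb_div (by linarith) (by linarith)]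
  ring

theorem monotoneOn_sinr {p q : ℝ} (hp : 0 ≤ p) (hq : 0 ≤ q) :
    MonotoneOn (fun h : ℝ => h * p / (h * q + 1)) (Set.Ici 0) := by
  intro a (ha : 0 ≤ a) b (hb : 0 ≤ b) hab
  rw [div_le_div_iff₀ (by positivity) (by positivity)]
  nlinarith [mul_le_mul_of_nonneg_right hab hp]

/-- In the two-user NOMA system with ordered gains H₁ ≤ H_e < H₂, the
secrecy sum-rate equals (1/2)·log₂((1 + H₂·p₂)/(1 + H_e·p₂)). -/
theorem secrecy_sum_rate_two_user (H1 He H2 p1 p2 : ℝ)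
    (hH1 : 0 < H1) (h1e : H1 ≤ He) (he2 : He < H2) (hp1 : 0 ≤ p1) (hp2 : 0 ≤ p2) :
    max 0 ((1/2) * Real.logb 2 (1 + H1 * p1 / (H1 * p2 + 1)) -
           (1/2) * Real.logb 2 (1 + He * p1 / (He * p2 + 1))) +
    max 0 ((1/2) * Real.logb 2 (1 + H2 * p2) -
           (1/2) * Real.logb 2 (1 + He * p2))
      = (1/2) * Real.logb 2 ((1 + H2 * p2) / (1 + He * p2)) := by
  have hHe : 0 < He := hH1.trans_le h1e
  change secrecyRate _ _ + secrecyRate _ _ = _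
  have weak_user_leaks : H1 * p1 / (H1 * p2 + 1) ≤ He * p1 / (He * p2 + 1) :=
    monotoneOn_sinr hp1 hp2 (Set.mem_Ici.2 hH1.le) (Set.mem_Ici.2 hHe.le) h1e
  have strong_user_wins : He * p2 ≤ H2 * p2 := mul_le_mul_of_nonneg_right he2.le hp2
  rw [secrecyRate_eq_zero_of_le (by positivity) weak_user_leaks,
    secrecyRate_eq_of_le (by positivity) strong_user_wins, zero_add]
end

section
/- Let u, v : [a, b] → ℝ be differentiable functions on an interval [a, b] ⊆ ℝ such that for all t ∈ [a, b]: v(t) > 0, u(t) ≥ v(t), v'(t) ≥ 0, and u'(t)·v(t) ≥ u(t)·v'(t). Then for every real p ≥ 0, the function f(t) = (1 + p·u(t)²)/(1 + p·v(t)²) is monotone nondecreasing on [a, b]. -/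
/-- If u, v are differentiable on [a, b] with v > 0, u ≥ v, v' ≥ 0 and
u'·v ≥ u·v' on [a, b], then for every p ≥ 0 the function
t ↦ (1 + p·u(t)²)/(1 + p·v(t)²) is monotone nondecreasing on [a, b]. -/
theorem ratio_one_add_sq_monotone (a b : ℝ) (hab : a ≤ b) (u v u' v' : ℝ → ℝ)
    (hu : ∀ t ∈ Set.Icc a b, HasDerivWithinAt u (u' t) (Set.Icc a b) t)
    (hv : ∀ t ∈ Set.Icc a b, HasDerivWithinAt v (v' t) (Set.Icc a b) t)
    (hvpos : ∀ t ∈ Set.Icc a b, 0 < v t)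
    (huv : ∀ t ∈ Set.Icc a b, v t ≤ u t)
    (hv' : ∀ t ∈ Set.Icc a b, 0 ≤ v' t)
    (hcross : ∀ t ∈ Set.Icc a b, u t * v' t ≤ u' t * v t)
    (p : ℝ) (hp : 0 ≤ p) :
    MonotoneOn (fun t => (1 + p * (u t) ^ 2) / (1 + p * (v t) ^ 2)) (Set.Icc a b) := by
  set f : ℝ → ℝ := fun t => (1 + p * (u t) ^ 2) / (1 + p * (v t) ^ 2) with hf
  -- derivative at interior points
  have hderivAt : ∀ t ∈ Set.Ioo a b, HasDerivAt f
      ((p * (2 * u t * u' t) * (1 + p * (v t) ^ 2)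
        - (1 + p * (u t) ^ 2) * (p * (2 * v t * v' t))) / (1 + p * (v t) ^ 2) ^ 2) t := by
    intro t ht
    have htI : t ∈ Set.Icc a b := Set.Ioo_subset_Icc_self ht
    have hmem : Set.Icc a b ∈ nhds t := Icc_mem_nhds ht.1 ht.2
    have hut : HasDerivAt u (u' t) t := (hu t htI).hasDerivAt hmem
    have hvt : HasDerivAt v (v' t) t := (hv t htI).hasDerivAt hmem
    have hden : 0 < 1 + p * (v t) ^ 2 := by positivity
    have hnum : HasDerivAt (fun s => 1 + p * (u s) ^ 2) (p * (2 * u t * u' t)) t := by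
      have : HasDerivAt (fun s => 1 + p * (u s) ^ 2) (p * (((2:ℕ):ℝ) * u t ^ (2 - 1) * u' t)) t :=
        ((hut.fun_pow 2).const_mul p).const_add 1
      convert this using 1
      ring
    have hdenD : HasDerivAt (fun s => 1 + p * (v s) ^ 2) (p * (2 * v t * v' t)) t := by
      have : HasDerivAt (fun s => 1 + p * (v s) ^ 2) (p * (((2:ℕ):ℝ) * v t ^ (2 - 1) * v' t)) t :=
        ((hvt.fun_pow 2).const_mul p).const_add 1
      convert this using 1
      ring
    exact hnum.div hdenD (ne_of_gt hden)
  have hcont : ContinuousOn f (Set.Icc a b) := by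
    apply ContinuousOn.div
    · exact continuousOn_const.add (continuousOn_const.mul
        ((ContinuousOn.pow (fun t ht => (hu t ht).continuousWithinAt) 2)))
    · exact continuousOn_const.add (continuousOn_const.mul
        ((ContinuousOn.pow (fun t ht => (hv t ht).continuousWithinAt) 2)))
    · intro t ht
      have : 0 < 1 + p * (v t) ^ 2 := by positivity
      exact ne_of_gt this
  have hint : interior (Set.Icc a b) = Set.Ioo a b := interior_Icc
  apply monotoneOn_of_deriv_nonneg (convex_Icc a b) hcont
  · rw [hint]
    intro t ht
    exact (hderivAt t ht).differentiableAt.differentiableWithinAt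
  · rw [hint]
    intro t ht
    have htI : t ∈ Set.Icc a b := Set.Ioo_subset_Icc_self ht
    rw [(hderivAt t ht).deriv]
    have hv0 := hvpos t htI
    have h1 := huv t htI
    have h2 := hv' t htI
    have h3 := hcross t htI
    have hu0 : 0 < u t := lt_of_lt_of_le hv0 h1
    have hu'0 : 0 ≤ u' t := by
      have : 0 ≤ u' t * v t := le_trans (by positivity) h3
      exact nonneg_of_mul_nonneg_right (by linarith [mul_comm (u' t) (v t)] : 0 ≤ v t * u' t) hv0
    -- u u' ≥ v v'
    have key1 : v t * v' t ≤ u t * u' t := by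
      nlinarith [mul_le_mul_of_nonneg_left h3 hu0.le, mul_le_mul_of_nonneg_left (mul_le_mul h1 h1 hv0.le hu0.le) h2]
    have key2 : 0 ≤ u t * v t * (u' t * v t - u t * v' t) := by
      have : 0 ≤ u' t * v t - u t * v' t := sub_nonneg.mpr h3
      positivity
    have hden : (0:ℝ) < (1 + p * (v t) ^ 2) ^ 2 := by positivity
    apply div_nonneg _ hden.le
    nlinarith [mul_nonneg (mul_nonneg hp hp) key2, mul_nonneg hp (sub_nonneg.mpr key1)]
end

section
/- Let h₂, h_e, g, g₂, g_e, σ₂, σ_e be strictly positive real numbers satisfying h₂·σ_e ≥ h_e·σ₂, g₂·σ_e ≥ g_e·σ₂, and g₂·h_e ≥ g_e·h₂, and let p > 0. Define the composite normalized channel gains H₂(ρ) = (h₂ + √ρ·g·g₂)²/σ₂² and H_e(ρ) = (h_e + √ρ·g·g_e)²/σ_e². Then the secrecy sum-rate S(ρ) = (1/2)·log₂((1 + H₂(ρ)·p)/(1 + H_e(ρ)·p)) is monotone nondecreasing on ρ ∈ [0, 1]; in particular, the optimal reflection coefficient maximizing S over [0, 1] is ρ* = 1. -/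
/-!
Write `t = √ρ` and normalize amplitudes by the noise, so that `H₂ = (x + tα)²` and
`H_e = (y + tβ)²` with `x = h₂/σ₂`, `α = g g₂/σ₂`, `y = h_e/σ_e`, `β = g g_e/σ_e`.
The hypotheses say `y ≤ x`, `β ≤ α` and `β x ≤ α y`. For `t ≤ s`, the ratio
`(1 + H₂ p)/(1 + H_e p)` increases as soon as the eavesdropper's gain grows by less than the
user's (first-order term in `p`) and `H₂/H_e` does not decrease (second-order term in `p`).
The first holds because both the difference and the sum of the user's amplitudes at `s` and `t`
dominate the eavesdropper's; the second because `(x + tα)/(y + tβ)` increases iff `β x ≤ α y`.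
-/

open Real Set

lemma one_add_mul_div_one_add_mul_le {u v u' v' p : ℝ} (hv : 0 ≤ v) (hv' : 0 ≤ v') (hp : 0 ≤ p)
    (hincr : v' - v ≤ u' - u) (hcross : u * v' ≤ u' * v) :
    (1 + u * p) / (1 + v * p) ≤ (1 + u' * p) / (1 + v' * p) := by
  rw [div_le_div_iff₀ (by positivity) (by positivity)]
  nlinarith [mul_le_mul_of_nonneg_left hincr hp, mul_le_mul_of_nonneg_left hcross (sq_nonneg p)]

lemma sq_sub_sq_le_sq_sub_sq {a b c d : ℝ} (hsub : 0 ≤ b - a) (hsub' : b - a ≤ d - c)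
    (hadd : 0 ≤ b + a) (hadd' : b + a ≤ d + c) : b ^ 2 - a ^ 2 ≤ d ^ 2 - c ^ 2 := by
  rw [sq_sub_sq, sq_sub_sq]
  exact mul_le_mul hadd' hsub' hsub (hadd.trans hadd')

lemma add_mul_mul_add_mul_le {x y α β t s : ℝ} (hts : t ≤ s) (hcross : β * x ≤ α * y) :
    (x + t * α) * (y + s * β) ≤ (x + s * α) * (y + t * β) := by
  nlinarith [mul_le_mul_of_nonneg_left hcross (sub_nonneg.2 hts)]

lemma monotoneOn_one_add_sq_mul_div_one_add_sq_mul {x y α β p : ℝ} (hy : 0 ≤ y) (hyx : y ≤ x)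
    (hβ : 0 ≤ β) (hβα : β ≤ α) (hcross : β * x ≤ α * y) (hp : 0 ≤ p) :
    MonotoneOn (fun t => (1 + (x + t * α) ^ 2 * p) / (1 + (y + t * β) ^ 2 * p)) (Ici 0) := by
  intro t (ht : 0 ≤ t) s (hs : 0 ≤ s) hts
  have hyt : 0 ≤ y + t * β := by positivity
  have hys : 0 ≤ y + s * β := by positivity
  have hxt : 0 ≤ x + t * α := by nlinarith
  refine one_add_mul_div_one_add_mul_le (sq_nonneg _) (sq_nonneg _) hp ?_ ?_
  · apply sq_sub_sq_le_sq_sub_sq <;> nlinarith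
  · rw [← mul_pow, ← mul_pow]
    exact pow_le_pow_left₀ (by positivity) (add_mul_mul_add_mul_le hts hcross) 2

lemma add_mul_sq_div_sq (h c σ t : ℝ) : (h + t * c) ^ 2 / σ ^ 2 = (h / σ + t * (c / σ)) ^ 2 := by
  rw [← div_pow, add_div, mul_div_assoc]

theorem optimal_reflection_coefficient_is_one_general
    (h2 he g g2 ge σ2 σe p : ℝ)
    (hhe : 0 < he) (hg : 0 < g) (hge : 0 < ge)
    (hσ2 : 0 < σ2) (hσe : 0 < σe) (hp : 0 < p)
    (hcond1 : he * σ2 ≤ h2 * σe) (hcond2 : ge * σ2 ≤ g2 * σe) (hcond3 : ge * h2 ≤ g2 * he) :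
    MonotoneOn (fun ρ : ℝ => (1/2) * Real.logb 2
      ((1 + ((h2 + Real.sqrt ρ * (g * g2)) ^ 2 / σ2 ^ 2) * p) /
       (1 + ((he + Real.sqrt ρ * (g * ge)) ^ 2 / σe ^ 2) * p))) (Set.Icc 0 1) ∧
    ∀ ρ ∈ Set.Icc (0:ℝ) 1,
      (1/2) * Real.logb 2
        ((1 + ((h2 + Real.sqrt ρ * (g * g2)) ^ 2 / σ2 ^ 2) * p) /
         (1 + ((he + Real.sqrt ρ * (g * ge)) ^ 2 / σe ^ 2) * p)) ≤
      (1/2) * Real.logb 2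
        ((1 + ((h2 + Real.sqrt 1 * (g * g2)) ^ 2 / σ2 ^ 2) * p) /
         (1 + ((he + Real.sqrt 1 * (g * ge)) ^ 2 / σe ^ 2) * p)) := by
  have hyx : he / σe ≤ h2 / σ2 := (div_le_div_iff₀ hσe hσ2).2 hcond1
  have hβα : g * ge / σe ≤ g * g2 / σ2 := by
    rw [div_le_div_iff₀ hσe hσ2, mul_assoc, mul_assoc]
    exact mul_le_mul_of_nonneg_left hcond2 hg.le
  have hcross : g * ge / σe * (h2 / σ2) ≤ g * g2 / σ2 * (he / σe) := by
    rw [div_mul_div_comm, div_mul_div_comm, mul_comm σe σ2]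
    refine div_le_div_of_nonneg_right ?_ (by positivity)
    rw [mul_assoc, mul_assoc]
    exact mul_le_mul_of_nonneg_left hcond3 hg.le
  have hratio := monotoneOn_one_add_sq_mul_div_one_add_sq_mul (by positivity) hyx
    (by positivity) hβα hcross hp.le
  suffices hmono : MonotoneOn _ (Icc (0 : ℝ) 1) from
    ⟨hmono, fun ρ hρ => hmono hρ ⟨zero_le_one, le_rfl⟩ hρ.2⟩
  intro ρ _ ρ' _ hρρ'
  simp only [add_mul_sq_div_sq]
  gcongr _ * logb 2 ?_
  · norm_num
  · exact hratio (sqrt_nonneg ρ) (sqrt_nonneg ρ') (sqrt_le_sqrt hρρ')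

/-- Under the stated channel conditions, the secrecy sum-rate
S(ρ) = (1/2)·log₂((1 + H₂(ρ)·p)/(1 + H_e(ρ)·p)) with composite gains
H₂(ρ) = (h₂ + √ρ·g·g₂)²/σ₂² and H_e(ρ) = (h_e + √ρ·g·g_e)²/σ_e² is monotone
nondecreasing on [0, 1]; in particular ρ* = 1 maximizes S over [0, 1]. -/
theorem optimal_reflection_coefficient_is_one
    (h2 he g g2 ge σ2 σe p : ℝ)
    (hh2 : 0 < h2) (hhe : 0 < he) (hg : 0 < g) (hg2 : 0 < g2) (hge : 0 < ge)
    (hσ2 : 0 < σ2) (hσe : 0 < σe) (hp : 0 < p)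
    (hcond1 : he * σ2 ≤ h2 * σe) (hcond2 : ge * σ2 ≤ g2 * σe) (hcond3 : ge * h2 ≤ g2 * he) :
    MonotoneOn (fun ρ : ℝ => (1/2) * Real.logb 2
      ((1 + ((h2 + Real.sqrt ρ * (g * g2)) ^ 2 / σ2 ^ 2) * p) /
       (1 + ((he + Real.sqrt ρ * (g * ge)) ^ 2 / σe ^ 2) * p))) (Set.Icc 0 1) ∧
    ∀ ρ ∈ Set.Icc (0:ℝ) 1,
      (1/2) * Real.logb 2
        ((1 + ((h2 + Real.sqrt ρ * (g * g2)) ^ 2 / σ2 ^ 2) * p) /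
         (1 + ((he + Real.sqrt ρ * (g * ge)) ^ 2 / σe ^ 2) * p)) ≤
      (1/2) * Real.logb 2
        ((1 + ((h2 + Real.sqrt 1 * (g * g2)) ^ 2 / σ2 ^ 2) * p) /
         (1 + ((he + Real.sqrt 1 * (g * ge)) ^ 2 / σe ^ 2) * p)) :=
  optimal_reflection_coefficient_is_one_general h2 he g g2 ge σ2 σe p hhe hg hge hσ2 hσe hp hcond1
    hcond2 hcond3
end

section
/- Let K ≥ 1, and let H₁, …, H_K > 0 and A₁, …, A_K ≥ 1 be real numbers. For p ∈ ℝ₊^K define θ_k(p) = Σ_{i=k}^K p_i for 1 ≤ k ≤ K and θ_{K+1}(p) = 0, and define P_min = Σ_{k=1}^K (A_k − 1)/H_k · ∏_{j=1}^{k−1} A_j. Then: (a) every p ∈ ℝ₊^K satisfying θ_k(p) ≥ A_k·θ_{k+1}(p) + (A_k − 1)/H_k for all k ∈ {1, …, K} satisfies θ₁(p) ≥ P_min; and (b) for any P_max ≥ 0, the feasible set {p ∈ ℝ₊^K : θ₁(p) ≤ P_max and θ_k(p) ≥ A_k·θ_{k+1}(p) + (A_k − 1)/H_k for all k} is nonempty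 if and only if P_max ≥ P_min. -/
/-!
Writing `c k = (A k - 1) / H k`, the constraints read `θ_k ≥ A k * θ_{k+1} + c k` with `θ_{K+1} = 0`.
Since `A k ≥ 0`, backward induction from `k = K` shows that `θ_k` dominates the solution `T k` of the
recursion `T k = c k + A k * T (k + 1)`, `T (K + 1) = 0`, and `T 1 = P_min`. Conversely the powers
`p k = T k - T (k + 1)` are nonnegative because `c k ≥ 0` and `A k ≥ 1`, their tail sums are exactly
`T k`, so they meet every constraint with equality and have total power `P_min`.
-/

open Finset

/-- The solution `T k` of `T k = c k + A k * T (k + 1)` for `k ≤ K`, `T (K + 1) = 0`, unrolled. -/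
noncomputable def minTailPower (A c : ℕ → ℝ) (K k : ℕ) : ℝ :=
  ∑ i ∈ Icc k K, c i * ∏ j ∈ Ico k i, A j

section minTailPower

variable {A c : ℕ → ℝ} {K : ℕ}

lemma minTailPower_of_lt {k : ℕ} (h : K < k) : minTailPower A c K k = 0 := by
  simp [minTailPower, Icc_eq_empty_of_lt h]

lemma minTailPower_eq_add_mul {k : ℕ} (h : k ≤ K) :
    minTailPower A c K k = c k + A k * minTailPower A c K (k + 1) := by
  rw [minTailPower, Icc_eq_cons_Ioc h, sum_cons, Ico_self, prod_empty, mul_one,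
    ← Icc_add_one_left_eq_Ioc, minTailPower, mul_sum]
  refine congrArg _ (sum_congr rfl fun i hi => ?_)
  rw [prod_eq_prod_Ico_succ_bot (by grind)]
  ring

lemma sum_Icc_sub_minTailPower {k : ℕ} (h : k ≤ K + 1) :
    ∑ i ∈ Icc k K, (minTailPower A c K i - minTailPower A c K (i + 1)) = minTailPower A c K k := by
  rw [← Ico_add_one_right_eq_Icc, ← neg_inj, ← sum_neg_distrib]
  simp only [neg_sub]
  rw [sum_Ico_sub _ h, minTailPower_of_lt (Nat.lt_succ_self K), zero_sub]

lemma minTailPower_nonneg {m : ℕ} (hc : ∀ k ∈ Icc m K, 0 ≤ c k)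
    (hA : ∀ k ∈ Icc m K, 0 ≤ A k) : 0 ≤ minTailPower A c K m :=
  sum_nonneg fun i hi => mul_nonneg (hc i hi) (prod_nonneg fun j hj => hA j (by grind))

lemma minTailPower_succ_le {k : ℕ} (hc : ∀ i ∈ Icc k K, 0 ≤ c i) (hA : ∀ i ∈ Icc k K, 1 ≤ A i) :
    minTailPower A c K (k + 1) ≤ minTailPower A c K k := by
  rcases lt_or_ge K k with hKk | hkK
  · rw [minTailPower_of_lt hKk, minTailPower_of_lt (hKk.trans k.lt_succ_self)]
  have hsub : Icc (k + 1) K ⊆ Icc k K := Icc_subset_Icc_left k.le_succ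
  have hk : k ∈ Icc k K := mem_Icc.2 ⟨le_rfl, hkK⟩
  have hT : 0 ≤ minTailPower A c K (k + 1) :=
    minTailPower_nonneg (fun i hi => hc i (hsub hi)) (fun i hi => zero_le_one.trans (hA i (hsub hi)))
  rw [minTailPower_eq_add_mul hkK]
  nlinarith [hc k hk, hA k hk]

lemma minTailPower_le_sum_Icc {p : ℕ → ℝ} {m : ℕ} (hA : ∀ k ∈ Icc m K, 0 ≤ A k)
    (hp : ∀ k ∈ Icc m K, A k * ∑ i ∈ Icc (k + 1) K, p i + c k ≤ ∑ i ∈ Icc k K, p i) :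
    minTailPower A c K m ≤ ∑ i ∈ Icc m K, p i := by
  rcases lt_or_ge K m with hKm | hmK
  · simp [minTailPower_of_lt hKm, Icc_eq_empty_of_lt hKm]
  have hsub : Icc (m + 1) K ⊆ Icc m K := Icc_subset_Icc_left m.le_succ
  have ih := minTailPower_le_sum_Icc (fun k hk => hA k (hsub hk)) (fun k hk => hp k (hsub hk))
  have hm : m ∈ Icc m K := mem_Icc.2 ⟨le_rfl, hmK⟩
  calc minTailPower A c K m = c m + A m * minTailPower A c K (m + 1) := minTailPower_eq_add_mul hmK
    _ ≤ c m + A m * ∑ i ∈ Icc (m + 1) K, p i := by gcongr; exact hA m hm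
    _ ≤ _ := by linarith [hp m hm]
termination_by K + 1 - m

lemma sum_Icc_one_mul_prod_eq_minTailPower :
    ∑ k ∈ Icc 1 K, c k * ∏ j ∈ Icc 1 (k - 1), A j = minTailPower A c K 1 := by
  refine sum_congr rfl fun k hk => ?_
  rw [Icc_sub_one_right_eq_Ico_of_not_isMin (not_isMin_of_lt (mem_Icc.1 hk).1)]

end minTailPower

theorem feasibility_iff_Pmin_general (K : ℕ) (H A : ℕ → ℝ)
    (hH : ∀ k ∈ Finset.Icc 1 K, 0 < H k)
    (hA : ∀ k ∈ Finset.Icc 1 K, 1 ≤ A k) (Pmax : ℝ) :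
    (∀ p : ℕ → ℝ, (∀ i ∈ Finset.Icc 1 K, 0 ≤ p i) →
        (∀ k ∈ Finset.Icc 1 K,
          (∑ i ∈ Finset.Icc k K, p i) ≥
            A k * (∑ i ∈ Finset.Icc (k+1) K, p i) + (A k - 1) / H k) →
        (∑ i ∈ Finset.Icc 1 K, p i) ≥
          ∑ k ∈ Finset.Icc 1 K, (A k - 1) / H k * ∏ j ∈ Finset.Icc 1 (k-1), A j) ∧
    ((∃ p : ℕ → ℝ, (∀ i ∈ Finset.Icc 1 K, 0 ≤ p i) ∧
        (∑ i ∈ Finset.Icc 1 K, p i) ≤ Pmax ∧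
        (∀ k ∈ Finset.Icc 1 K,
          (∑ i ∈ Finset.Icc k K, p i) ≥
            A k * (∑ i ∈ Finset.Icc (k+1) K, p i) + (A k - 1) / H k)) ↔
      Pmax ≥ ∑ k ∈ Finset.Icc 1 K, (A k - 1) / H k * ∏ j ∈ Finset.Icc 1 (k-1), A j) := by
  rw [sum_Icc_one_mul_prod_eq_minTailPower (c := fun k => (A k - 1) / H k)]
  set T := minTailPower A (fun k => (A k - 1) / H k) K
  have hc : ∀ k ∈ Icc 1 K, 0 ≤ (A k - 1) / H k :=
    fun k hk => div_nonneg (sub_nonneg.2 (hA k hk)) (hH k hk).le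
  have lower : ∀ p : ℕ → ℝ, (∀ k ∈ Icc 1 K,
      ∑ i ∈ Icc k K, p i ≥ A k * ∑ i ∈ Icc (k + 1) K, p i + (A k - 1) / H k) →
      ∑ i ∈ Icc 1 K, p i ≥ T 1 :=
    fun p hp => minTailPower_le_sum_Icc (fun k hk => zero_le_one.trans (hA k hk)) hp
  refine ⟨fun p _ hp => lower p hp,
    fun ⟨p, _, hle, hp⟩ => (lower p hp).trans hle, fun hPmax => ?_⟩
  have hsub {k : ℕ} (hk : 1 ≤ k) : Icc k K ⊆ Icc 1 K := Icc_subset_Icc_left hk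
  refine ⟨fun i => T i - T (i + 1), fun i hi => ?_, ?_, fun k hk => ?_⟩
  · have hi1 := (mem_Icc.1 hi).1
    exact sub_nonneg.2 (minTailPower_succ_le (fun j hj => hc j (hsub hi1 hj))
      (fun j hj => hA j (hsub hi1 hj)))
  · rwa [sum_Icc_sub_minTailPower (by omega)]
  · obtain ⟨-, hkK⟩ := mem_Icc.1 hk
    rw [sum_Icc_sub_minTailPower (by omega), sum_Icc_sub_minTailPower (by omega),
      minTailPower_eq_add_mul hkK, add_comm]

/-- In the K-user NOMA system with QoS constraints
θ_k(p) ≥ A_k·θ_{k+1}(p) + (A_k − 1)/H_k, (a) every feasible power vector satisfies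
θ₁(p) ≥ P_min, and (b) the feasible set is nonempty iff P_max ≥ P_min, where
P_min = Σ_{k=1}^K (A_k − 1)/H_k · ∏_{j=1}^{k−1} A_j. -/
theorem feasibility_iff_Pmin (K : ℕ) (hK : 1 ≤ K) (H A : ℕ → ℝ)
    (hH : ∀ k ∈ Finset.Icc 1 K, 0 < H k)
    (hA : ∀ k ∈ Finset.Icc 1 K, 1 ≤ A k) (Pmax : ℝ) (hPmax : 0 ≤ Pmax) :
    (∀ p : ℕ → ℝ, (∀ i ∈ Finset.Icc 1 K, 0 ≤ p i) →
        (∀ k ∈ Finset.Icc 1 K,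
          (∑ i ∈ Finset.Icc k K, p i) ≥
            A k * (∑ i ∈ Finset.Icc (k+1) K, p i) + (A k - 1) / H k) →
        (∑ i ∈ Finset.Icc 1 K, p i) ≥
          ∑ k ∈ Finset.Icc 1 K, (A k - 1) / H k * ∏ j ∈ Finset.Icc 1 (k-1), A j) ∧
    ((∃ p : ℕ → ℝ, (∀ i ∈ Finset.Icc 1 K, 0 ≤ p i) ∧
        (∑ i ∈ Finset.Icc 1 K, p i) ≤ Pmax ∧
        (∀ k ∈ Finset.Icc 1 K,
          (∑ i ∈ Finset.Icc k K, p i) ≥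
            A k * (∑ i ∈ Finset.Icc (k+1) K, p i) + (A k - 1) / H k)) ↔
      Pmax ≥ ∑ k ∈ Finset.Icc 1 K, (A k - 1) / H k * ∏ j ∈ Finset.Icc 1 (k-1), A j) :=
  feasibility_iff_Pmin_general K H A hH hA Pmax
end

section
/- Let 0 < H₁ ≤ H_e < H₂, let A₁, A₂ ≥ 1, α > 0, P_c ≥ 0, and let P_max ≥ (A₁ − 1)/H₁ + A₁·(A₂ − 1)/H₂. Define the feasible set Π = {(p₁, p₂) ∈ ℝ₊² : p₁ + p₂ ≤ P_max, p₁ ≥ (A₁ − 1)·(p₂ + 1/H₁), p₂ ≥ (A₂ − 1)/H₂} and the objective Ψ(p₁, p₂) = (1/2)·log₂((1 + H₂·p₂)/(1 + H_e·p₂)) − α·(p₁ + p₂ + P_c). Then every maximizer (p₁*, p₂*) of Ψ over Π satisfies the weak user's quality-of-service constraint with equality: p₁* = (A₁ − 1)·(p₂* + 1/H₁). -/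
/-! The objective depends on `p₁` only through the power-cost term `-α p₁`, so it strictly
decreases in `p₁`, while lowering `p₁` to `(A₁ - 1)(p₂ + 1/H₁)` keeps the point feasible.
A maximizer therefore cannot leave slack in the weak user's QoS constraint. -/

theorem fst_eq_of_strictAnti_of_le {α β γ : Type*} [PartialOrder α] [Preorder γ]
    {f : α × β → γ} {p : α × β} {b : α} (hf : StrictAnti fun x => f (x, p.2)) (hb : b ≤ p.1)
    (hmax : f (b, p.2) ≤ f p) : p.1 = b := by
  by_contra hne
  exact (hf (lt_of_le_of_ne hb (Ne.symm hne))).not_ge hmax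

/-- The feasible power allocations `Π`. -/
def feasiblePowers (H1 H2 A1 A2 Pmax : ℝ) : Set (ℝ × ℝ) :=
  {q | 0 ≤ q.1 ∧ 0 ≤ q.2 ∧ q.1 + q.2 ≤ Pmax ∧
    q.1 ≥ (A1 - 1) * (q.2 + 1 / H1) ∧ q.2 ≥ (A2 - 1) / H2}

/-- The secrecy energy-efficiency objective `Ψ`. -/
noncomputable def secrecyObjective (He H2 α Pc : ℝ) (q : ℝ × ℝ) : ℝ :=
  (1/2) * Real.logb 2 ((1 + H2 * q.2) / (1 + He * q.2)) - α * (q.1 + q.2 + Pc)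

theorem secrecyObjective_strictAnti_fst {He H2 α Pc : ℝ} (hα : 0 < α) (y : ℝ) :
    StrictAnti fun x => secrecyObjective He H2 α Pc (x, y) := fun _ _ hlt => by
  simp only [secrecyObjective]
  gcongr

theorem tight_mem_feasiblePowers {H1 H2 A1 A2 Pmax : ℝ} (hH1 : 0 ≤ H1) (hA1 : 1 ≤ A1)
    {p : ℝ × ℝ} (hp : p ∈ feasiblePowers H1 H2 A1 A2 Pmax) :
    ((A1 - 1) * (p.2 + 1 / H1), p.2) ∈ feasiblePowers H1 H2 A1 A2 Pmax := by
  obtain ⟨-, hp2, hsum, hqos1, hqos2⟩ := hp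
  have hq1 : 0 ≤ (A1 - 1) * (p.2 + 1 / H1) := by
    have : 0 ≤ 1 / H1 := by positivity
    exact mul_nonneg (by linarith) (by linarith)
  exact ⟨hq1, hp2, by dsimp only; linarith, le_rfl, hqos2⟩

theorem maximizer_has_tight_weak_user_qos_general (H1 He H2 A1 A2 α Pc Pmax : ℝ)
    (hH1 : 0 < H1)
    (hA1 : 1 ≤ A1) (hα : 0 < α) :
    ∀ p : ℝ × ℝ,
      (0 ≤ p.1 ∧ 0 ≤ p.2 ∧ p.1 + p.2 ≤ Pmax ∧
        p.1 ≥ (A1 - 1) * (p.2 + 1 / H1) ∧ p.2 ≥ (A2 - 1) / H2) →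
      (∀ q : ℝ × ℝ,
        (0 ≤ q.1 ∧ 0 ≤ q.2 ∧ q.1 + q.2 ≤ Pmax ∧
          q.1 ≥ (A1 - 1) * (q.2 + 1 / H1) ∧ q.2 ≥ (A2 - 1) / H2) →
        (1/2) * Real.logb 2 ((1 + H2 * q.2) / (1 + He * q.2)) - α * (q.1 + q.2 + Pc) ≤
        (1/2) * Real.logb 2 ((1 + H2 * p.2) / (1 + He * p.2)) - α * (p.1 + p.2 + Pc)) →
      p.1 = (A1 - 1) * (p.2 + 1 / H1) := by
  intro p hp hmax
  have hp : p ∈ feasiblePowers H1 H2 A1 A2 Pmax := hp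
  exact fst_eq_of_strictAnti_of_le (f := secrecyObjective He H2 α Pc)
    (secrecyObjective_strictAnti_fst hα p.2) hp.2.2.2.1
    (hmax _ (tight_mem_feasiblePowers hH1.le hA1 hp))

/-- In the two-user system with ordered gains H₁ ≤ H_e < H₂, every
maximizer of the SEE objective Ψ over the feasible set Π makes the weak user's QoS
constraint tight: p₁* = (A₁ − 1)·(p₂* + 1/H₁). -/
theorem maximizer_has_tight_weak_user_qos (H1 He H2 A1 A2 α Pc Pmax : ℝ)
    (hH1 : 0 < H1) (h1e : H1 ≤ He) (he2 : He < H2)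
    (hA1 : 1 ≤ A1) (hA2 : 1 ≤ A2) (hα : 0 < α) (hPc : 0 ≤ Pc)
    (hPmax : (A1 - 1) / H1 + A1 * (A2 - 1) / H2 ≤ Pmax) :
    ∀ p : ℝ × ℝ,
      (0 ≤ p.1 ∧ 0 ≤ p.2 ∧ p.1 + p.2 ≤ Pmax ∧
        p.1 ≥ (A1 - 1) * (p.2 + 1 / H1) ∧ p.2 ≥ (A2 - 1) / H2) →
      (∀ q : ℝ × ℝ,
        (0 ≤ q.1 ∧ 0 ≤ q.2 ∧ q.1 + q.2 ≤ Pmax ∧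
          q.1 ≥ (A1 - 1) * (q.2 + 1 / H1) ∧ q.2 ≥ (A2 - 1) / H2) →
        (1/2) * Real.logb 2 ((1 + H2 * q.2) / (1 + He * q.2)) - α * (q.1 + q.2 + Pc) ≤
        (1/2) * Real.logb 2 ((1 + H2 * p.2) / (1 + He * p.2)) - α * (p.1 + p.2 + Pc)) →
      p.1 = (A1 - 1) * (p.2 + 1 / H1) :=
  maximizer_has_tight_weak_user_qos_general H1 He H2 A1 A2 α Pc Pmax hH1 hA1 hα
end

section
/- Let 0 < H₁ ≤ H_e < H₂, let A₁, A₂ ≥ 1, α > 0, P_c ≥ 0, and let P_max ≥ (A₁ − 1)/H₁ + A₁·(A₂ − 1)/H₂. Define the feasible set Π = {(p₁, p₂) ∈ ℝ₊² : p₁ + p₂ ≤ P_max, p₁ ≥ (A₁ − 1)·(p₂ + 1/H₁), p₂ ≥ (A₂ − 1)/H₂}, the objective Ψ(p₁, p₂) = (1/2)·log₂((1 + H₂·p₂)/(1 + H_e·p₂)) − α·(p₁ + p₂ + P_c), and the reduced single-variable function g(t) = (1/2)·log₂((1 + H₂·t)/(1 + H_e·t)) − α·(A₁·t + (A₁ −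 1)/H₁ + P_c) on the interval I = [(A₂ − 1)/H₂, (P_max − (A₁ − 1)/H₁)/A₁]. Then the maximum of Ψ over Π is attained and equals the maximum of g over I; moreover, (p₁, p₂) maximizes Ψ over Π with p₁ = (A₁ − 1)·(p₂ + 1/H₁) if and only if p₂ maximizes g over I. -/
/-! For fixed `p₂` the objective decreases in `p₁`, so the weak user's QoS constraint should be
tight. The tight choice `p₁ = (A₁ - 1)(p₂ + 1/H₁)` maps `I` into the feasible set, projection
onto `p₂` maps the feasible set into `I` (the power budget becomes the upper end of `I`), and
along the tight section the objective is exactly `g`. Hence the two problems have the same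
maximizers, and a maximizer exists because `g` is continuous on the compact interval `I`, which
the power budget makes nonempty. -/

open Set

section Reduction

variable {α Y β : Type*} [Preorder β] {S : Set (α × Y)} {I : Set Y} {Ψ : α × Y → β}
  {g : Y → β} {f : Y → α}

theorem tight_maximizer_iff (hf : MapsTo (fun t => (f t, t)) I S) (hS : MapsTo Prod.snd S I)
    (hle : ∀ p ∈ S, Ψ p ≤ g p.2) (heq : ∀ t ∈ I, Ψ (f t, t) = g t) {t : Y} :
    ((f t, t) ∈ S ∧ ∀ p ∈ S, Ψ p ≤ Ψ (f t, t)) ↔ (t ∈ I ∧ ∀ s ∈ I, g s ≤ g t) := by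
  constructor
  · rintro ⟨hft, hmax⟩
    have ht : t ∈ I := hS hft
    refine ⟨ht, fun s hs => ?_⟩
    calc g s = Ψ (f s, s) := (heq s hs).symm
      _ ≤ Ψ (f t, t) := hmax _ (hf hs)
      _ = g t := heq t ht
  · rintro ⟨ht, hmax⟩
    refine ⟨hf ht, fun p hp => ?_⟩
    calc Ψ p ≤ g p.2 := hle p hp
      _ ≤ g t := hmax _ (hS hp)
      _ = Ψ (f t, t) := (heq t ht).symm

theorem exists_isGreatest_image_of_tight (hf : MapsTo (fun t => (f t, t)) I S)
    (hS : MapsTo Prod.snd S I) (hle : ∀ p ∈ S, Ψ p ≤ g p.2) (heq : ∀ t ∈ I, Ψ (f t, t) = g t)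
    (hmax : ∃ t ∈ I, IsMaxOn g I t) :
    ∃ M, IsGreatest (Ψ '' S) M ∧ IsGreatest (g '' I) M := by
  obtain ⟨t, ht, hmax⟩ := hmax
  obtain ⟨hft, hΨmax⟩ := (tight_maximizer_iff hf hS hle heq).2 ⟨ht, hmax⟩
  refine ⟨g t, ?_, mem_image_of_mem g ht, forall_mem_image.2 hmax⟩
  exact heq t ht ▸ ⟨mem_image_of_mem Ψ hft, forall_mem_image.2 hΨmax⟩

end Reduction

theorem continuousOn_logb_div_one_add_mul (c : ℝ) {a b : ℝ} (ha : 0 ≤ a) (hb : 0 ≤ b) :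
    ContinuousOn (fun t => Real.logb c ((1 + a * t) / (1 + b * t))) (Ici 0) := by
  refine .logb (.div (by fun_prop) (by fun_prop) fun t (ht : 0 ≤ t) => ?_)
    fun t (ht : 0 ≤ t) => ?_ <;> positivity

theorem see_two_user_reduction_to_one_variable_general (H1 He H2 A1 A2 α Pc Pmax : ℝ)
    (hH1 : 0 < H1) (h1e : H1 ≤ He) (he2 : He < H2)
    (hA1 : 1 ≤ A1) (hA2 : 1 ≤ A2) (hα : 0 < α)
    (hPmax : (A1 - 1) / H1 + A1 * (A2 - 1) / H2 ≤ Pmax) :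
    letI Feas : Set (ℝ × ℝ) := {p | 0 ≤ p.1 ∧ 0 ≤ p.2 ∧ p.1 + p.2 ≤ Pmax ∧
      p.1 ≥ (A1 - 1) * (p.2 + 1 / H1) ∧ p.2 ≥ (A2 - 1) / H2}
    letI Ψ : ℝ × ℝ → ℝ := fun p =>
      (1/2) * Real.logb 2 ((1 + H2 * p.2) / (1 + He * p.2)) - α * (p.1 + p.2 + Pc)
    letI g : ℝ → ℝ := fun t =>
      (1/2) * Real.logb 2 ((1 + H2 * t) / (1 + He * t)) -
        α * (A1 * t + (A1 - 1) / H1 + Pc)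
    letI I : Set ℝ := Set.Icc ((A2 - 1) / H2) ((Pmax - (A1 - 1) / H1) / A1)
    (∃ Mv : ℝ, IsGreatest (Ψ '' Feas) Mv ∧ IsGreatest (g '' I) Mv) ∧
    (∀ p1 p2 : ℝ, p1 = (A1 - 1) * (p2 + 1 / H1) →
      (((p1, p2) ∈ Feas ∧ ∀ q ∈ Feas, Ψ q ≤ Ψ (p1, p2)) ↔
        (p2 ∈ I ∧ ∀ t ∈ I, g t ≤ g p2))) := by
  have hHe : 0 < He := hH1.trans_le h1e
  have hH2 : 0 < H2 := hHe.trans he2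
  have hA1pos : 0 < A1 := one_pos.trans_le hA1
  have hlow_nonneg : 0 ≤ (A2 - 1) / H2 := div_nonneg (by linarith) hH2.le
  have htight : ∀ t, (A1 - 1) * (t + 1 / H1) = A1 * t + (A1 - 1) / H1 - t := fun t => by ring
  refine ⟨exists_isGreatest_image_of_tight (f := fun t => (A1 - 1) * (t + 1 / H1))
    ?hf ?hS ?hle ?heq ?hmax, fun _ _ hp => hp ▸ tight_maximizer_iff ?hf ?hS ?hle ?heq⟩
  case hf =>
    intro t ⟨hlow, hup⟩
    have ht : 0 ≤ t := hlow_nonneg.trans hlow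
    have : t * A1 ≤ Pmax - (A1 - 1) / H1 := (le_div_iff₀ hA1pos).1 hup
    refine ⟨by positivity, ht, ?_, le_rfl, hlow⟩
    dsimp only
    linarith [htight t]
  case hS =>
    exact fun p ⟨_, _, hsum, hp1, hlow⟩ =>
      ⟨hlow, (le_div_iff₀ hA1pos).2 (by linarith [htight p.2])⟩
  case hle =>
    intro p ⟨_, _, _, hp1, _⟩
    gcongr _ - α * ?_
    linarith [htight p.2]
  case heq =>
    intro t _
    ring
  case hmax =>
    refine isCompact_Icc.exists_isMaxOn (nonempty_Icc.2 ?_)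
      (ContinuousOn.mono ?_ fun t ht => hlow_nonneg.trans ht.1)
    · exact (le_div_iff₀ hA1pos).2 (by linarith [mul_div_assoc A1 (A2 - 1) H2])
    · exact (continuousOn_const.mul (continuousOn_logb_div_one_add_mul 2 hH2.le hHe.le)).sub
        (by fun_prop)

/-- Substituting the tight weak-user QoS constraint
p₁ = (A₁ − 1)·(p₂ + 1/H₁) reduces the two-variable SEE problem over Π to the
one-variable problem of maximizing g over I: both maxima are attained and equal,
and (p₁, p₂) with tight constraint maximizes Ψ over Π iff p₂ maximizes g over I. -/
theorem see_two_user_reduction_to_one_variable (H1 He H2 A1 A2 α Pc Pmax : ℝ)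
    (hH1 : 0 < H1) (h1e : H1 ≤ He) (he2 : He < H2)
    (hA1 : 1 ≤ A1) (hA2 : 1 ≤ A2) (hα : 0 < α) (hPc : 0 ≤ Pc)
    (hPmax : (A1 - 1) / H1 + A1 * (A2 - 1) / H2 ≤ Pmax) :
    letI Feas : Set (ℝ × ℝ) := {p | 0 ≤ p.1 ∧ 0 ≤ p.2 ∧ p.1 + p.2 ≤ Pmax ∧
      p.1 ≥ (A1 - 1) * (p.2 + 1 / H1) ∧ p.2 ≥ (A2 - 1) / H2}
    letI Ψ : ℝ × ℝ → ℝ := fun p =>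
      (1/2) * Real.logb 2 ((1 + H2 * p.2) / (1 + He * p.2)) - α * (p.1 + p.2 + Pc)
    letI g : ℝ → ℝ := fun t =>
      (1/2) * Real.logb 2 ((1 + H2 * t) / (1 + He * t)) -
        α * (A1 * t + (A1 - 1) / H1 + Pc)
    letI I : Set ℝ := Set.Icc ((A2 - 1) / H2) ((Pmax - (A1 - 1) / H1) / A1)
    (∃ Mv : ℝ, IsGreatest (Ψ '' Feas) Mv ∧ IsGreatest (g '' I) Mv) ∧
    (∀ p1 p2 : ℝ, p1 = (A1 - 1) * (p2 + 1 / H1) →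
      (((p1, p2) ∈ Feas ∧ ∀ q ∈ Feas, Ψ q ≤ Ψ (p1, p2)) ↔
        (p2 ∈ I ∧ ∀ t ∈ I, g t ≤ g p2))) :=
  see_two_user_reduction_to_one_variable_general H1 He H2 A1 A2 α Pc Pmax hH1 h1e he2 hA1 hA2 hα
    hPmax
end

section
/- Let G₂, G_e, G₁₂, G₁e, G₂₂, G₂e be strictly positive real numbers satisfying G₂ ≥ G_e, G₂₂ ≥ G₂e, G₁₂·G_e ≥ G₁e·G₂, and G₁₂·G₂e ≥ G₁e·G₂₂. Fix ρ₂ ∈ [0, 1] and p > 0, and define u(ρ₁) = G₂ + √ρ₁·G₁₂ + √ρ₂·G₂₂ and v(ρ₁) = G_e + √ρ₁·G₁e + √ρ₂·G₂e. Then the secrecy sum-rate S(ρ₁) = (1/2)·log₂((1 + p·u(ρ₁)²)/(1 + p·v(ρ₁)²)) is monotone nondecreasing in ρ₁ on [0, 1]. -/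
/-!
Write `s = √ρ₁` and `c = √ρ₂`; then `u = A + s·a` and `v = B + s·b` are affine in `s` with
`A = G₂ + c·G₂₂`, `B = G_e + c·G₂e`, `a = G₁₂`, `b = G₁e`, and the hypotheses say `B ≤ A` and
`b·A ≤ a·B`. For `s ≤ t`, cross-multiplying `(1 + p·u_s²)/(1 + p·v_s²) ≤ (1 + p·u_t²)/(1 + p·v_t²)`
splits into the coefficients of `p` and `p²`: `v_t² - v_s² ≤ u_t² - u_s²` and
`u_s·v_t ≤ u_t·v_s`. The latter is the identity `u_t·v_s - u_s·v_t = (t - s)(a·B - b·A)`; the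
former holds because `b ≤ a` and `v ≤ u` pointwise, so
`(t - s)·b·(v_t + v_s) ≤ (t - s)·a·(u_t + u_s)`.
-/

open Real

lemma one_add_mul_sq_div_le_of_cross {p us vs ut vt : ℝ} (hp : 0 ≤ p)
    (hsq : vt ^ 2 - vs ^ 2 ≤ ut ^ 2 - us ^ 2) (hcross₀ : 0 ≤ us * vt)
    (hcross : us * vt ≤ ut * vs) :
    (1 + p * us ^ 2) / (1 + p * vs ^ 2) ≤ (1 + p * ut ^ 2) / (1 + p * vt ^ 2) := by
  rw [div_le_div_iff₀ (by positivity) (by positivity)]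
  have hprod : (us * vt) ^ 2 ≤ (ut * vs) ^ 2 := pow_le_pow_left₀ hcross₀ hcross 2
  nlinarith [mul_le_mul_of_nonneg_left hsq hp, mul_le_mul_of_nonneg_left hprod (mul_nonneg hp hp)]

section Affine

variable {A B a b s t : ℝ}

lemma affine_mul_affine_le (hab : b * A ≤ a * B) (hst : s ≤ t) :
    (A + s * a) * (B + t * b) ≤ (A + t * a) * (B + s * b) := by
  have hdiff : (A + t * a) * (B + s * b) - (A + s * a) * (B + t * b) =
      (t - s) * (a * B - b * A) := by
    ring
  have hnonneg : 0 ≤ (t - s) * (a * B - b * A) := mul_nonneg (sub_nonneg.2 hst) (sub_nonneg.2 hab)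
  linarith

lemma le_of_mul_le_mul_of_le (hb : 0 ≤ b) (hB : 0 < B) (hBA : B ≤ A) (hab : b * A ≤ a * B) :
    b ≤ a :=
  le_of_mul_le_mul_right ((mul_le_mul_of_nonneg_left hBA hb).trans hab) hB

lemma affine_le_affine (hba : b ≤ a) (hBA : B ≤ A) (hs : 0 ≤ s) : B + s * b ≤ A + s * a := by
  nlinarith

lemma affine_sq_sub_le (hb : 0 ≤ b) (hB : 0 < B) (hBA : B ≤ A) (hab : b * A ≤ a * B)
    (hs : 0 ≤ s) (hst : s ≤ t) :
    (B + t * b) ^ 2 - (B + s * b) ^ 2 ≤ (A + t * a) ^ 2 - (A + s * a) ^ 2 := by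
  have hba := le_of_mul_le_mul_of_le hb hB hBA hab
  have ht := hs.trans hst
  have hsum : b * ((B + t * b) + (B + s * b)) ≤ a * ((A + t * a) + (A + s * a)) :=
    mul_le_mul hba (add_le_add (affine_le_affine hba hBA ht) (affine_le_affine hba hBA hs))
      (by positivity) (hb.trans hba)
  nlinarith [mul_le_mul_of_nonneg_left hsum (sub_nonneg.2 hst)]

theorem monotoneOn_one_add_mul_sq_div_affine {p : ℝ} (hp : 0 ≤ p) (hb : 0 ≤ b) (hB : 0 < B)
    (hBA : B ≤ A) (hab : b * A ≤ a * B) :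
    MonotoneOn (fun s => (1 + p * (A + s * a) ^ 2) / (1 + p * (B + s * b) ^ 2)) (Set.Ici 0) := by
  intro s (hs : 0 ≤ s) t (ht : 0 ≤ t) hst
  have hus : 0 ≤ A + s * a :=
    (by positivity : 0 ≤ B + s * b).trans
      (affine_le_affine (le_of_mul_le_mul_of_le hb hB hBA hab) hBA hs)
  exact one_add_mul_sq_div_le_of_cross hp (affine_sq_sub_le hb hB hBA hab hs hst)
    (mul_nonneg hus (by positivity)) (affine_mul_affine_le hab hst)

end Affine

theorem secrecy_sum_rate_monotone_in_rho1_general (G2 Ge G12 G1e G22 G2e ρ2 p : ℝ)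
    (hGe : 0 < Ge) (hG1e : 0 < G1e)
    (hG2e : 0 < G2e)
    (h1 : Ge ≤ G2) (h2 : G2e ≤ G22)
    (h3 : G1e * G2 ≤ G12 * Ge) (h4 : G1e * G22 ≤ G12 * G2e)
    (hp : 0 < p) :
    MonotoneOn (fun ρ1 : ℝ => (1/2) * Real.logb 2
      ((1 + p * (G2 + Real.sqrt ρ1 * G12 + Real.sqrt ρ2 * G22) ^ 2) /
       (1 + p * (Ge + Real.sqrt ρ1 * G1e + Real.sqrt ρ2 * G2e) ^ 2)))
      (Set.Icc 0 1) := by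
  set c := √ρ2
  have hc : 0 ≤ c := sqrt_nonneg ρ2
  have hratio := monotoneOn_one_add_mul_sq_div_affine (A := G2 + c * G22) (B := Ge + c * G2e)
    (a := G12) hp.le hG1e.le (by positivity) (add_le_add h1 (mul_le_mul_of_nonneg_left h2 hc))
    (by linarith [mul_le_mul_of_nonneg_left h4 hc])
  intro x _ y _ hxy
  have hle := hratio (sqrt_nonneg x) (sqrt_nonneg y) (sqrt_le_sqrt hxy)
  simp only [add_right_comm _ (_ * G12), add_right_comm _ (_ * G1e)] at hle ⊢
  gcongr
  norm_num

/-- In the two-backscatter system, under the stated channel-amplitude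
conditions the secrecy sum-rate
S(ρ₁) = (1/2)·log₂((1 + p·u(ρ₁)²)/(1 + p·v(ρ₁)²)) with
u(ρ₁) = G₂ + √ρ₁·G₁₂ + √ρ₂·G₂₂ and v(ρ₁) = G_e + √ρ₁·G₁e + √ρ₂·G₂e is monotone
nondecreasing in ρ₁ on [0, 1]. -/
theorem secrecy_sum_rate_monotone_in_rho1 (G2 Ge G12 G1e G22 G2e ρ2 p : ℝ)
    (hG2 : 0 < G2) (hGe : 0 < Ge) (hG12 : 0 < G12) (hG1e : 0 < G1e)
    (hG22 : 0 < G22) (hG2e : 0 < G2e)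
    (h1 : Ge ≤ G2) (h2 : G2e ≤ G22)
    (h3 : G1e * G2 ≤ G12 * Ge) (h4 : G1e * G22 ≤ G12 * G2e)
    (hρ2 : ρ2 ∈ Set.Icc (0:ℝ) 1) (hp : 0 < p) :
    MonotoneOn (fun ρ1 : ℝ => (1/2) * Real.logb 2
      ((1 + p * (G2 + Real.sqrt ρ1 * G12 + Real.sqrt ρ2 * G22) ^ 2) /
       (1 + p * (Ge + Real.sqrt ρ1 * G1e + Real.sqrt ρ2 * G2e) ^ 2)))
      (Set.Icc 0 1) :=
  secrecy_sum_rate_monotone_in_rho1_general G2 Ge G12 G1e G22 G2e ρ2 p hGe hG1e hG2e h1 h2 h3 h4 hp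
end
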